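/- Given distinct complex numbers μ₁ = u + iv (v ≠ 0), μ₂ = conj(μ₁), real numbers μ₃, ..., μ_N, and a vector w ∈ ℂ^N, if {w, conj(w), u₃, ..., u_N} is a basis of ℂ^N with u₃, ..., u_N real vectors, then the matrix A = Q D Q⁻¹, where Q = (w, conj(w), u₃, ..., u_N) and D = diag(μ₁, μ₂, μ₃, ..., μ_N), is a real matrix having w as an eigenvector with eigenvalue μ₁. -/
import Mathlib


open Complex in
/-- Constructive design of an adjacency matrix with a complex leading pair: if Q has
columns w, conj w, u₃, ..., u_N (the latter real) forming a basis of ℂ^N and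
D = diag(u+iv, u-iv, μ₃, ..., μ_N) with v ≠ 0 and μ₃, ..., μ_N real, then
A = Q D Q⁻¹ is a real matrix having w as an eigenvector with eigenvalue u + iv. -/
theorem stmt_5 {n : ℕ} (u v : ℝ) (hv : v ≠ 0)
    (μ : Fin (n + 2) → ℂ)
    (hμ0 : μ 0 = u + v * I) (hμ1 : μ 1 = u - v * I)
    (hμreal : ∀ i : Fin (n + 2), 2 ≤ (i : ℕ) → (μ i).im = 0)
    (w : Fin (n + 2) → ℂ)
    (Q : Matrix (Fin (n + 2)) (Fin (n + 2)) ℂ)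
    (hQ0 : ∀ j, Q j 0 = w j)
    (hQ1 : ∀ j, Q j 1 = (starRingEnd ℂ) (w j))
    (hQreal : ∀ j, ∀ i : Fin (n + 2), 2 ≤ (i : ℕ) → (Q j i).im = 0)
    (hQinv : IsUnit Q.det) :
    (∀ i j, ((Q * Matrix.diagonal μ * Q⁻¹) i j).im = 0)
    ∧ (Q * Matrix.diagonal μ * Q⁻¹).mulVec w = μ 0 • w := by
  have h01 : (0 : Fin (n+2)) ≠ 1 := by simp [Fin.ext_iff]
  set τ : Equiv.Perm (Fin (n+2)) := Equiv.swap 0 1 with hτ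
  set P : Matrix (Fin (n+2)) (Fin (n+2)) ℂ := τ.toPEquiv.toMatrix with hP
  have hτfix : ∀ i : Fin (n+2), 2 ≤ (i : ℕ) → τ i = i := by
    intro i hi
    apply Equiv.swap_apply_of_ne_of_ne <;>
      · rintro rfl; simp at hi
  have hPP : P * P = 1 := by
    rw [hP, ← PEquiv.toMatrix_trans, ← Equiv.toPEquiv_trans]
    have : τ.trans τ = Equiv.refl _ := by
      ext x; simp [hτ, Equiv.swap_apply_self]
    rw [this, Equiv.toPEquiv_refl, PEquiv.toMatrix_refl]
  have hμτ : ∀ i, μ (τ i) = (starRingEnd ℂ) (μ i) := by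
    intro i
    rcases lt_or_ge (i : ℕ) 2 with h | h
    · interval_cases hi : (i : ℕ)
      · have hi0 : i = 0 := Fin.ext (by simpa using hi)
        subst hi0
        rw [hτ, Equiv.swap_apply_left, hμ0, hμ1, map_add, map_mul, conj_ofReal,
          conj_ofReal, conj_I]
        ring
      · have hi1 : i = 1 := Fin.ext (by simpa using hi)
        subst hi1
        rw [hτ, Equiv.swap_apply_right, hμ0, hμ1, map_sub, map_mul, conj_ofReal,
          conj_ofReal, conj_I]
        ring
    · rw [hτfix i h, Complex.conj_eq_iff_im.2 (hμreal i h)]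
  -- conj of Q
  have hQconj : Q.map (starRingEnd ℂ) = Q * P := by
    rw [hP, PEquiv.mul_toMatrix_toPEquiv]
    ext j i
    have hsymm : τ.symm = τ := by rw [hτ]; exact Equiv.symm_swap 0 1
    rw [Matrix.submatrix_apply, hsymm, Matrix.map_apply]
    simp only [id]
    rcases lt_or_ge (i : ℕ) 2 with h | h
    · interval_cases hi : (i : ℕ)
      · have hi0 : i = 0 := Fin.ext (by simpa using hi)
        subst hi0
        rw [hQ0, hτ, Equiv.swap_apply_left, hQ1]
      · have hi1 : i = 1 := Fin.ext (by simpa using hi)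
        subst hi1
        rw [hQ1, hτ, Equiv.swap_apply_right, hQ0, RingHomInvPair.comp_apply_eq]
    · rw [hτfix i h, Complex.conj_eq_iff_im.2 (hQreal j i h)]
  -- conj of D
  have hDconj : (Matrix.diagonal μ).map (starRingEnd ℂ) = P * Matrix.diagonal μ * P := by
    rw [hP, PEquiv.toMatrix_toPEquiv_mul, PEquiv.mul_toMatrix_toPEquiv]
    have hsymm : τ.symm = τ := by rw [hτ]; exact Equiv.symm_swap 0 1
    ext i j
    rw [Matrix.submatrix_apply, Matrix.submatrix_apply, hsymm, Matrix.map_apply, id]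
    by_cases h : i = j
    · subst h; simp [Matrix.diagonal_apply_eq, hμτ]
    · have : τ i ≠ τ j := fun hc => h (τ.injective hc)
      simp [Matrix.diagonal_apply_ne _ h, Matrix.diagonal_apply_ne _ this]
  -- conj of Q⁻¹
  have hQinvconj : (Q⁻¹).map (starRingEnd ℂ) = P * Q⁻¹ := by
    have h1 : (Q.map (starRingEnd ℂ)) * ((Q⁻¹).map (starRingEnd ℂ)) = 1 := by
      rw [← Matrix.map_mul, Q.mul_nonsing_inv hQinv, Matrix.map_one _ (map_zero _) (map_one _)]
    have h2 : (Q.map (starRingEnd ℂ)) * (P * Q⁻¹) = 1 := by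
      rw [hQconj, Matrix.mul_assoc, ← Matrix.mul_assoc P, hPP, Matrix.one_mul,
        Q.mul_nonsing_inv hQinv]
    rw [← Matrix.inv_eq_right_inv h1, ← Matrix.inv_eq_right_inv h2]
  have hAconj : (Q * Matrix.diagonal μ * Q⁻¹).map (starRingEnd ℂ)
      = Q * Matrix.diagonal μ * Q⁻¹ := by
    rw [Matrix.map_mul, Matrix.map_mul, hQconj, hDconj, hQinvconj]
    have h3 : Q * P * (P * Matrix.diagonal μ * P) * (P * Q⁻¹)
        = Q * ((P * P) * (Matrix.diagonal μ * ((P * P) * Q⁻¹))) := by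
      simp only [Matrix.mul_assoc]
    rw [h3, hPP, Matrix.one_mul, Matrix.one_mul, ← Matrix.mul_assoc]
  constructor
  · intro i j
    have := congrFun (congrFun hAconj i) j
    rw [Matrix.map_apply] at this
    exact Complex.conj_eq_iff_im.1 this
  · have hw : Q.mulVec (Pi.single 0 1) = w := by
      ext j
      simp [Matrix.mulVec_single, hQ0]
    have : (Q * Matrix.diagonal μ * Q⁻¹).mulVec w
        = Q.mulVec ((Matrix.diagonal μ).mulVec ((Q⁻¹).mulVec w)) := by
      rw [← Matrix.mulVec_mulVec, ← Matrix.mulVec_mulVec]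
    have hwinv : Q⁻¹.mulVec w = Pi.single 0 1 := by
      rw [← hw, Matrix.mulVec_mulVec, Q.nonsing_inv_mul hQinv, Matrix.one_mulVec]
    rw [this, hwinv]
    ext j
    simp [Matrix.mulVec, dotProduct, Matrix.diagonal_apply, Pi.single_apply,
      Finset.sum_ite_eq, hQ0, mul_comm]
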